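/- arXiv:0904.2061 — 6 statements merged into one kernel-verified Lean document; each statement's English description precedes it below -/
import Mathlib

section
/- For every reasonable partition π of an instance of selfish bin covering, there exists a Nash equilibrium π' of the same instance with p(π') ≥ p(π). -/
open Finset

/-- Total size of the items in a bin. -/
def binSize {n : ℕ} (a : Fin n → ℕ) (B : Finset (Fin n)) : ℕ := ∑ j ∈ B, a j

/-- The social welfare of a partition: the number of covered bins. -/
def welfare {n : ℕ} (a : Fin n → ℕ) (b : ℕ)
    (π : Finpartition (univ : Finset (Fin n))) : ℕ :=
  (π.parts.filter fun B => b ≤ binSize a B).card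

/-- The payoff of item `j` when it lies in bin `B`. -/
def payoffIn {n : ℕ} (a : Fin n → ℕ) (b : ℕ) (j : Fin n) (B : Finset (Fin n)) : ℚ :=
  if b ≤ binSize a B then (a j : ℚ) / (binSize a B : ℚ) else 0

/-- Nash equilibrium. -/
def IsNE {n : ℕ} (a : Fin n → ℕ) (b : ℕ)
    (π : Finpartition (univ : Finset (Fin n))) : Prop :=
  (∀ j : Fin n, ∀ B ∈ π.parts, j ∉ B →
      payoffIn a b j (insert j B) ≤ payoffIn a b j (π.part j)) ∧
  ∀ j : Fin n, payoffIn a b j {j} ≤ payoffIn a b j (π.part j)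

/-- A partition is reasonable if at most one bin is uncovered. -/
def Reasonable {n : ℕ} (a : Fin n → ℕ) (b : ℕ)
    (π : Finpartition (univ : Finset (Fin n))) : Prop :=
  (π.parts.filter fun B => binSize a B < b).card ≤ 1

/-- A bin is minimal covered if it is covered and removing any member uncovers it. -/
def MinimalCovered {n : ℕ} (a : Fin n → ℕ) (b : ℕ) (B : Finset (Fin n)) : Prop :=
  b ≤ binSize a B ∧ ∀ j ∈ B, binSize a (B.erase j) < b

/-- A partition is rational if it is reasonable and every covered bin is minimal covered. -/
def RationalPartition {n : ℕ} (a : Fin n → ℕ) (b : ℕ)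
    (π : Finpartition (univ : Finset (Fin n))) : Prop :=
  Reasonable a b π ∧ ∀ B ∈ π.parts, b ≤ binSize a B → MinimalCovered a b B

/-- `B_m(π)`: the unique uncovered bin of a (rational) partition if one exists, `∅` otherwise. -/
def uncoveredBin {n : ℕ} (a : Fin n → ℕ) (b : ℕ)
    (π : Finpartition (univ : Finset (Fin n))) : Finset (Fin n) :=
  (π.parts.filter fun B => binSize a B < b).sup id

/-- `δ(B) = s(B)` if `B` is covered, `+∞` otherwise. -/
def delta {n : ℕ} (a : Fin n → ℕ) (b : ℕ) (B : Finset (Fin n)) : ℕ∞ :=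
  if b ≤ binSize a B then (binSize a B : ℕ∞) else ⊤

/-- Fireable Nash equilibrium of type (I). -/
def IsFNE1 {n : ℕ} (a : Fin n → ℕ) (b : ℕ)
    (π : Finpartition (univ : Finset (Fin n))) : Prop :=
  RationalPartition a b π ∧
  ¬ ∃ j : Fin n, b ≤ binSize a (π.part j) ∧
      MinimalCovered a b (insert j (uncoveredBin a b π)) ∧
      binSize a (uncoveredBin a b π) + a j < binSize a (π.part j)

/-- Fireable Nash equilibrium of type (II). -/
def IsFNE2 {n : ℕ} (a : Fin n → ℕ) (b : ℕ)
    (π : Finpartition (univ : Finset (Fin n))) : Prop :=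
  RationalPartition a b π ∧
  ¬ ∃ (j : Fin n) (E : Finset (Fin n)), b ≤ binSize a (π.part j) ∧
      E ⊆ uncoveredBin a b π ∧
      MinimalCovered a b (insert j (uncoveredBin a b π \ E)) ∧
      binSize a (uncoveredBin a b π \ E) + a j < binSize a (π.part j)

/-- Fireable Nash equilibrium of type (III). -/
def IsFNE3 {n : ℕ} (a : Fin n → ℕ) (b : ℕ)
    (π : Finpartition (univ : Finset (Fin n))) : Prop :=
  RationalPartition a b π ∧
  ¬ ∃ (j : Fin n) (Bi E : Finset (Fin n)), Bi ∈ π.parts ∧ j ∉ Bi ∧ E ⊆ Bi ∧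
      MinimalCovered a b (insert j (Bi \ E)) ∧
      ((binSize a (Bi \ E) + a j : ℕ) : ℕ∞) < min (delta a b Bi) (delta a b (π.part j))

/-- Modified strong Nash equilibrium. -/
def IsMSNE {n : ℕ} (a : Fin n → ℕ) (b : ℕ)
    (π : Finpartition (univ : Finset (Fin n))) : Prop :=
  RationalPartition a b π ∧
  ¬ ∃ (Bi E : Finset (Fin n)), Bi ∈ π.parts ∧ b ≤ binSize a Bi ∧ E ⊆ Bi ∧
      binSize a (uncoveredBin a b π) < binSize a (Bi \ E) ∧
      MinimalCovered a b (uncoveredBin a b π ∪ E)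

/-- Strong Nash equilibrium. -/
def IsSNE {n : ℕ} (a : Fin n → ℕ) (b : ℕ)
    (π : Finpartition (univ : Finset (Fin n))) : Prop :=
  ¬ ∃ B : Finset (Fin n), b ≤ binSize a B ∧
      ∀ j ∈ B, binSize a (π.part j) < b ∨ binSize a B < binSize a (π.part j)

/-- `F` is a minimum subset w.r.t. `(E, b)`. -/
def IsMinSubset {n : ℕ} (a : Fin n → ℕ) (b : ℕ) (F E : Finset (Fin n)) : Prop :=
  F ⊆ E ∧ b ≤ binSize a F ∧ ∀ G ⊆ E, b ≤ binSize a G → binSize a F ≤ binSize a G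


/-!
If no bin of `π` is covered, the partition into a single bin is already an equilibrium, since an
item alone never covers a bin. Otherwise, among the partitions with at least as many covered bins
as `π`, take one minimizing lexicographically the total size of its uncovered bins and then the sum
of the squared bin sizes. Moving an item from an uncovered bin into a covered one would lower the
first coordinate, so every bin is covered. An item of a bin `S` gains by joining a bin `B` only if
`s(B) + a_j < s(S)`; that move keeps every bin covered and lowers the sum of squares.
-/

namespace Finpartition

variable {α : Type*} [DecidableEq α] {s S B : Finset α} {j : α} {P : Finpartition s}

lemma disjoint_of_mem_erase_erase (hS : S ∈ P.parts) (hB : B ∈ P.parts) {D : Finset α}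
    (hD : D ∈ (P.parts.erase S).erase B) : Disjoint S D ∧ Disjoint B D := by
  obtain ⟨hDB, hDS, hD⟩ : D ≠ B ∧ D ≠ S ∧ D ∈ P.parts := by simpa using hD
  exact ⟨P.disjoint hS hD (Ne.symm hDS), P.disjoint hB hD (Ne.symm hDB)⟩

lemma parts_eq_insert_insert_erase_erase (hS : S ∈ P.parts) (hB : B ∈ P.parts) (hSB : S ≠ B) :
    P.parts = insert S (insert B ((P.parts.erase S).erase B)) := by
  rw [insert_erase (mem_erase.2 ⟨hSB.symm, hB⟩), insert_erase hS]

variable (P) in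
def moveParts (S B : Finset α) (j : α) : Finset (Finset α) :=
  insert (S.erase j) (insert (insert j B) ((P.parts.erase S).erase B))

lemma pairwiseDisjoint_moveParts (hS : S ∈ P.parts) (hjS : j ∈ S) (hB : B ∈ P.parts)
    (hjB : j ∉ B) : (P.moveParts S B j : Set (Finset α)).PairwiseDisjoint id := by
  have hSB : Disjoint S B := P.disjoint hS hB fun h => hjB (h ▸ hjS)
  have hR : ∀ D ∈ (P.parts.erase S).erase B, Disjoint S D ∧ Disjoint B D :=
    fun D hD => disjoint_of_mem_erase_erase hS hB hD
  simp only [moveParts, coe_insert]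
  refine ((P.disjoint.subset ?_).insert fun D hD _ => ?_).insert fun D hD _ => ?_
  · exact coe_subset.2 ((erase_subset _ _).trans (erase_subset _ _))
  · exact disjoint_insert_left.2
      ⟨fun hjD => (hR D hD).1.notMem_of_mem_left_finset hjS hjD, (hR D hD).2⟩
  · obtain rfl | hD := Set.mem_insert_iff.1 hD
    · exact disjoint_insert_right.2 ⟨notMem_erase _ _, hSB.mono_left (erase_subset _ _)⟩
    · exact (hR D hD).1.mono_left (erase_subset _ _)

lemma sup_moveParts (hS : S ∈ P.parts) (hjS : j ∈ S) (hB : B ∈ P.parts) (hjB : j ∉ B) :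
    (P.moveParts S B j).sup id = s := by
  conv_rhs => rw [← P.sup_parts,
    parts_eq_insert_insert_erase_erase hS hB fun h => hjB (h ▸ hjS)]
  simp only [moveParts, sup_insert, id]
  ext x
  by_cases hx : x = j <;> simp [hx, hjS]

/-- Move `j` from its part `S` to the part `B`, dropping `S.erase j` if it is empty. -/
def move (hS : S ∈ P.parts) (hjS : j ∈ S) (hB : B ∈ P.parts) (hjB : j ∉ B) :
    Finpartition s :=
  ofErase _ (supIndep_iff_pairwiseDisjoint.2 (pairwiseDisjoint_moveParts hS hjS hB hjB))
    (sup_moveParts hS hjS hB hjB)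

theorem sum_move (hS : S ∈ P.parts) (hjS : j ∈ S) (hB : B ∈ P.parts) (hjB : j ∉ B)
    {M : Type*} [AddCommMonoid M] (f : Finset α → M) (hf : f ∅ = 0) :
    ∑ D ∈ (move hS hjS hB hjB).parts, f D + f S + f B =
      ∑ D ∈ P.parts, f D + f (S.erase j) + f (insert j B) := by
  have hSB : S ≠ B := fun h => hjB (h ▸ hjS)
  set R := (P.parts.erase S).erase B
  have hR : ∀ D ∈ R, Disjoint S D := fun D hD => (disjoint_of_mem_erase_erase hS hB hD).1
  have hB' : insert j B ∉ R := fun h =>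
    (hR _ h).notMem_of_mem_left_finset hjS (mem_insert_self _ _)
  have hS' : S.erase j ∉ insert (insert j B) R := by
    rw [mem_insert]
    rintro (h | h)
    · exact notMem_erase j S (h ▸ mem_insert_self j B)
    · obtain ⟨x, hx⟩ := P.nonempty_of_mem_parts ((erase_subset _ _).trans (erase_subset _ _) h)
      exact (hR _ h).notMem_of_mem_left_finset (mem_of_mem_erase hx) hx
  rw [move, ofErase_parts, sum_erase _ (show f ⊥ = 0 from hf), moveParts, sum_insert hS',
    sum_insert hB']
  conv_rhs => rw [parts_eq_insert_insert_erase_erase hS hB hSB, sum_insert (by simp [hSB]),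
    sum_insert (by simp)]
  abel

end Finpartition

section SelfishBinCovering

variable {n : ℕ} {a : Fin n → ℕ} {b : ℕ}

lemma binSize_erase_add {j : Fin n} {S : Finset (Fin n)} (hjS : j ∈ S) :
    binSize a (S.erase j) + a j = binSize a S :=
  sum_erase_add _ _ hjS

lemma binSize_insert {j : Fin n} {B : Finset (Fin n)} (hjB : j ∉ B) :
    binSize a (insert j B) = binSize a B + a j := by
  rw [binSize, sum_insert hjB, add_comm]; rfl

lemma payoffIn_nonneg (j : Fin n) (B : Finset (Fin n)) : 0 ≤ payoffIn a b j B := by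
  unfold payoffIn
  split_ifs <;> positivity

lemma payoffIn_singleton_le {j : Fin n} (hj : a j < b) (B : Finset (Fin n)) :
    payoffIn a b j {j} ≤ payoffIn a b j B := by
  have : ¬b ≤ binSize a {j} := by simpa [binSize] using hj
  simpa [payoffIn, this] using payoffIn_nonneg j B

lemma payoffIn_insert_le {j : Fin n} {S B : Finset (Fin n)} (hb : 0 < b) (hjB : j ∉ B)
    (hS : b ≤ binSize a S) (hSB : binSize a S ≤ binSize a B + a j) :
    payoffIn a b j (insert j B) ≤ payoffIn a b j S := by
  have hins := binSize_insert (a := a) hjB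
  rw [payoffIn, payoffIn, if_pos (by omega), if_pos hS]
  gcongr
  · exact_mod_cast hb.trans_le hS
  · exact_mod_cast hins ▸ hSB

theorem isNE_indiscrete (hab : ∀ j, a j < b) (h : (univ : Finset (Fin n)) ≠ ∅) :
    IsNE a b (Finpartition.indiscrete h) := by
  refine ⟨fun j B hB hjB => ?_, fun j => payoffIn_singleton_le (hab j) _⟩
  rw [Finpartition.indiscrete_parts, mem_singleton] at hB
  exact absurd (hB ▸ mem_univ j) hjB

end SelfishBinCovering

section Potential

variable {n : ℕ} {a : Fin n → ℕ} {b : ℕ}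

def uncoveredSize (a : Fin n → ℕ) (b : ℕ) (ρ : Finpartition (univ : Finset (Fin n))) : ℕ :=
  ∑ D ∈ ρ.parts, if binSize a D < b then binSize a D else 0

def binSizeSqSum (a : Fin n → ℕ) (ρ : Finpartition (univ : Finset (Fin n))) : ℕ :=
  ∑ D ∈ ρ.parts, binSize a D ^ 2

def potential (a : Fin n → ℕ) (b : ℕ) (ρ : Finpartition (univ : Finset (Fin n))) :
    ℕ ×ₗ ℕ :=
  toLex (uncoveredSize a b ρ, binSizeSqSum a ρ)

lemma welfare_eq_sum (ρ : Finpartition (univ : Finset (Fin n))) :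
    welfare a b ρ = ∑ D ∈ ρ.parts, if b ≤ binSize a D then 1 else 0 :=
  card_filter _ _

variable {ρ : Finpartition (univ : Finset (Fin n))} {j : Fin n} {S B : Finset (Fin n)}

lemma welfare_move (hb : 0 < b) (hS : S ∈ ρ.parts) (hjS : j ∈ S) (hB : B ∈ ρ.parts)
    (hjB : j ∉ B) (hBcov : b ≤ binSize a B)
    (hcov : b ≤ binSize a (S.erase j) ↔ b ≤ binSize a S) :
    welfare a b (ρ.move hS hjS hB hjB) = welfare a b ρ := by
  have := ρ.sum_move hS hjS hB hjB (fun D => if b ≤ binSize a D then 1 else 0)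
    (by simp [binSize, hb.ne'])
  have hins : b ≤ binSize a (insert j B) := by rw [binSize_insert hjB]; omega
  simp only [← welfare_eq_sum, if_pos hBcov, if_pos hins, hcov] at this
  omega

lemma uncoveredSize_move_lt (ha : 0 < a j) (hS : S ∈ ρ.parts) (hjS : j ∈ S)
    (hB : B ∈ ρ.parts) (hjB : j ∉ B) (hSunc : binSize a S < b) (hBcov : b ≤ binSize a B) :
    uncoveredSize a b (ρ.move hS hjS hB hjB) < uncoveredSize a b ρ := by
  have := ρ.sum_move hS hjS hB hjB (fun D => if binSize a D < b then binSize a D else 0)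
    (by split <;> simp [binSize])
  have hins : ¬binSize a (insert j B) < b := by rw [binSize_insert hjB]; omega
  have herase := binSize_erase_add (a := a) hjS
  unfold uncoveredSize
  simp only [if_pos hSunc, if_neg hins, if_neg (not_lt.2 hBcov),
    if_pos (show binSize a (S.erase j) < b by omega)] at this
  omega

lemma uncoveredSize_move_eq (hS : S ∈ ρ.parts) (hjS : j ∈ S) (hB : B ∈ ρ.parts)
    (hjB : j ∉ B) (hScov : b ≤ binSize a (S.erase j)) (hBcov : b ≤ binSize a B) :
    uncoveredSize a b (ρ.move hS hjS hB hjB) = uncoveredSize a b ρ := by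
  have := ρ.sum_move hS hjS hB hjB (fun D => if binSize a D < b then binSize a D else 0)
    (by split <;> simp [binSize])
  have hins : ¬binSize a (insert j B) < b := by rw [binSize_insert hjB]; omega
  have herase := binSize_erase_add (a := a) hjS
  unfold uncoveredSize
  simp only [if_neg hins, if_neg (not_lt.2 hBcov), if_neg (not_lt.2 hScov),
    if_neg (show ¬binSize a S < b by omega)] at this
  omega

lemma binSizeSqSum_move_lt (ha : 0 < a j) (hS : S ∈ ρ.parts) (hjS : j ∈ S)
    (hB : B ∈ ρ.parts) (hjB : j ∉ B) (hlt : binSize a B + a j < binSize a S) :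
    binSizeSqSum a (ρ.move hS hjS hB hjB) < binSizeSqSum a ρ := by
  have := ρ.sum_move hS hjS hB hjB (fun D => binSize a D ^ 2) (by simp [binSize])
  have herase := binSize_erase_add (a := a) hjS
  unfold binSizeSqSum
  simp only [binSize_insert hjB] at this
  have key : binSize a (S.erase j) ^ 2 + (binSize a B + a j) ^ 2 <
      binSize a S ^ 2 + binSize a B ^ 2 := by
    rw [← herase]; nlinarith
  omega

def IsPotentialMin (a : Fin n → ℕ) (b : ℕ) (ρ : Finpartition (univ : Finset (Fin n))) :
    Prop :=
  ∀ ρ', welfare a b ρ ≤ welfare a b ρ' → potential a b ρ ≤ potential a b ρ'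

lemma IsPotentialMin.forall_covered (hmin : IsPotentialMin a b ρ) (ha : ∀ j, 0 < a j)
    (hb : 0 < b) (hw : 0 < welfare a b ρ) : ∀ D ∈ ρ.parts, b ≤ binSize a D := by
  by_contra! ⟨U, hU, hUb⟩
  obtain ⟨C, hC, hCb⟩ : ∃ C ∈ ρ.parts, b ≤ binSize a C := by
    simpa [welfare, card_pos, filter_nonempty_iff] using hw
  obtain ⟨j, hjU⟩ := ρ.nonempty_of_mem_parts hU
  have hjC : j ∉ C := fun hjC => by
    rw [ρ.eq_of_mem_parts hU hC hjU hjC] at hUb; omega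
  have hUerase := binSize_erase_add (a := a) hjU
  have hw' := welfare_move hb hU hjU hC hjC hCb (iff_of_false (by omega) (by omega))
  refine (hmin _ hw'.ge).not_gt (Prod.Lex.toLex_lt_toLex.2 (Or.inl ?_))
  exact uncoveredSize_move_lt (ha j) hU hjU hC hjC hUb hCb

theorem IsPotentialMin.isNE (hmin : IsPotentialMin a b ρ) (ha : ∀ j, 0 < a j)
    (hab : ∀ j, a j < b) (hb : 0 < b)
    (hcov : ∀ D ∈ ρ.parts, b ≤ binSize a D) : IsNE a b ρ := by
  refine ⟨fun j B hB hjB => ?_, fun j => payoffIn_singleton_le (hab j) _⟩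
  have hS := ρ.part_mem.2 (mem_univ j)
  have hjS := ρ.mem_part (mem_univ j)
  refine payoffIn_insert_le hb hjB (hcov _ hS) (not_lt.1 fun hlt => ?_)
  have hScov : b ≤ binSize a ((ρ.part j).erase j) := by
    have := binSize_erase_add (a := a) hjS
    have := hcov B hB
    omega
  have hw' := welfare_move hb hS hjS hB hjB (hcov B hB) (iff_of_true hScov (hcov _ hS))
  refine (hmin _ hw'.ge).not_gt (Prod.Lex.toLex_lt_toLex.2 (Or.inr ⟨?_, ?_⟩))
  · exact uncoveredSize_move_eq hS hjS hB hjB hScov (hcov B hB)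
  · exact binSizeSqSum_move_lt (ha j) hS hjS hB hjB hlt

end Potential

theorem stmt1_general (n : ℕ) (hn : 1 ≤ n) (a : Fin n → ℕ) (b : ℕ)
    (ha : ∀ j, 0 < a j) (hab : ∀ j, a j < b)
    (π : Finpartition (univ : Finset (Fin n))) :
    ∃ π' : Finpartition (univ : Finset (Fin n)),
      IsNE a b π' ∧ welfare a b π ≤ welfare a b π' := by
  have hb : 0 < b := (ha ⟨0, hn⟩).trans (hab ⟨0, hn⟩)
  rcases Nat.eq_zero_or_pos (welfare a b π) with hw | hw
  · have hne : (univ : Finset (Fin n)) ≠ ∅ := (univ_nonempty_iff.2 ⟨⟨0, hn⟩⟩).ne_empty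
    exact ⟨.indiscrete hne, isNE_indiscrete hab hne, hw ▸ Nat.zero_le _⟩
  obtain ⟨ρ, hρ, hmin⟩ := Set.exists_min_image {ρ | welfare a b π ≤ welfare a b ρ}
    (potential a b) (Set.toFinite _) ⟨π, show welfare a b π ≤ welfare a b π from le_rfl⟩
  have hmin' : IsPotentialMin a b ρ := fun ρ' h => hmin ρ' (hρ.trans h)
  exact ⟨ρ, hmin'.isNE ha hab hb (hmin'.forall_covered ha hb (hw.trans_le hρ)), hρ⟩

/-- every reasonable partition can be turned into an NE without
decreasing the social welfare. -/
theorem stmt1 (n : ℕ) (hn : 1 ≤ n) (a : Fin n → ℕ) (b : ℕ)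
    (ha : ∀ j, 0 < a j) (hab : ∀ j, a j < b)
    (π : Finpartition (univ : Finset (Fin n))) (hπ : Reasonable a b π) :
    ∃ π' : Finpartition (univ : Finset (Fin n)),
      IsNE a b π' ∧ welfare a b π ≤ welfare a b π' :=
  stmt1_general n hn a b ha hab π
end

section
/- For every rational partition π of an instance of selfish bin covering, OPT ≤ 2·p(π). -/
/-!
Every covered bin of a rational partition is minimal covered, so it exceeds `b - 1` by at most
one item, which is itself smaller than `b`; hence it has size at most `2 (b - 1)`, and the single
uncovered bin has size at most `b - 1`. The total size of the items is therefore at most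
`(2 p(π) + 1)(b - 1)`, while every partition needs total size at least `b` per covered bin.
-/

open Finset

section

variable {n : ℕ} (a : Fin n → ℕ) (b : ℕ)

lemma sum_binSize_parts {s : Finset (Fin n)} (P : Finpartition s) :
    ∑ B ∈ P.parts, binSize a B = ∑ j ∈ s, a j := by
  conv_rhs => rw [← P.biUnion_parts]
  exact (sum_biUnion P.supIndep.pairwiseDisjoint).symm

lemma mul_welfare_le_sum (σ : Finpartition (univ : Finset (Fin n))) :
    b * welfare a b σ ≤ ∑ j, a j :=
  calc b * welfare a b σ = #(σ.parts.filter fun B => b ≤ binSize a B) • b := mul_comm _ _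
    _ ≤ ∑ B ∈ σ.parts.filter (fun B => b ≤ binSize a B), binSize a B :=
        card_nsmul_le_sum _ _ _ fun _ hB => (mem_filter.mp hB).2
    _ ≤ ∑ B ∈ σ.parts, binSize a B := sum_le_sum_of_subset (filter_subset _ _)
    _ = ∑ j, a j := sum_binSize_parts a σ

variable {a b}

lemma MinimalCovered.binSize_le {B : Finset (Fin n)} (hB : MinimalCovered a b B)
    (hne : B.Nonempty) (hab : ∀ j ∈ B, a j < b) : binSize a B ≤ 2 * (b - 1) := by
  obtain ⟨j, hj⟩ := hne
  have hsplit : binSize a (B.erase j) + a j = binSize a B := sum_erase_add B a hj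
  have herase := hB.2 j hj
  have hj_lt := hab j hj
  omega

lemma RationalPartition.sum_le {π : Finpartition (univ : Finset (Fin n))}
    (hπ : RationalPartition a b π) (hab : ∀ j, a j < b) :
    ∑ j, a j ≤ (2 * welfare a b π + 1) * (b - 1) := by
  rw [← sum_binSize_parts a π, ← sum_filter_add_sum_filter_not π.parts (b ≤ binSize a ·)]
  have hcovered : ∑ B ∈ π.parts.filter (b ≤ binSize a ·), binSize a B
      ≤ welfare a b π * (2 * (b - 1)) :=
    sum_le_card_nsmul _ _ _ fun B hB => by
      obtain ⟨hBπ, hBb⟩ := mem_filter.mp hB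
      exact (hπ.2 B hBπ hBb).binSize_le (π.nonempty_of_mem_parts hBπ) fun j _ => hab j
  have huncovered : ∑ B ∈ π.parts.filter (¬ b ≤ binSize a ·), binSize a B ≤ 1 * (b - 1) :=
    calc _ ≤ #(π.parts.filter (¬ b ≤ binSize a ·)) • (b - 1) :=
          sum_le_card_nsmul _ _ _ fun B hB => by have := (mem_filter.mp hB).2; omega
      _ ≤ 1 * (b - 1) := Nat.mul_le_mul_right _ (by simp only [not_le]; exact hπ.1)
  linarith

end

theorem stmt5_general (n : ℕ) (a : Fin n → ℕ) (b : ℕ)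
    (hab : ∀ j, a j < b)
    (π : Finpartition (univ : Finset (Fin n))) (hπ : RationalPartition a b π)
    (σ : Finpartition (univ : Finset (Fin n))) :
    welfare a b σ ≤ 2 * welfare a b π := by
  rcases Nat.eq_zero_or_pos b with rfl | hb
  · have : IsEmpty (Fin n) := ⟨fun j => (hab j).not_ge (Nat.zero_le _)⟩
    simp [welfare, σ.parts_eq_empty_iff.mpr (univ_eq_empty (α := Fin n))]
  refine Nat.lt_succ_iff.mp (Nat.lt_of_mul_lt_mul_left (a := b) ?_)
  calc b * welfare a b σ ≤ ∑ j, a j := mul_welfare_le_sum a b σ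
    _ ≤ (2 * welfare a b π + 1) * (b - 1) := hπ.sum_le hab
    _ < (2 * welfare a b π + 1) * b := Nat.mul_lt_mul_of_pos_left (by omega) (by omega)
    _ = b * (2 * welfare a b π + 1) := mul_comm _ _

/-- for every rational partition `π`, `OPT ≤ 2 p(π)`. -/
theorem stmt5 (n : ℕ) (hn : 1 ≤ n) (a : Fin n → ℕ) (b : ℕ)
    (ha : ∀ j, 0 < a j) (hab : ∀ j, a j < b)
    (π : Finpartition (univ : Finset (Fin n))) (hπ : RationalPartition a b π)
    (σ : Finpartition (univ : Finset (Fin n))) :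
    welfare a b σ ≤ 2 * welfare a b π :=
  stmt5_general n a b hab π hπ σ
end

section
/- Let π be a reasonable partition of an instance of selfish bin covering whose covered bins are B_1, …, B_{m−1} with s(B_1) ≤ s(B_2) ≤ … ≤ s(B_{m−1}), and let B_m denote the unique uncovered bin of π if one exists and B_m = ∅ otherwise. Then π is an SNE if and only if for every 1 ≤ k ≤ m−1, the bin B_k is a minimum subset w.r.t. (B_k ∪ B_{k+1} ∪ … ∪ B_{m−1} ∪ B_m, b). -/
open Finset

/-!
A blocking coalition `S` of a partition whose covered bins are sorted by size must meet some
covered bin, since the uncovered bin alone has size `< b`. If `B k` is the first covered bin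
that `S` meets, then `S` lies in the union of `B k, B (k+1), …` and the uncovered bin, and
since the members of `S` in `B k` are strictly better off, `s(S) < s(B k)`; so `B k` is not a
minimum subset of that union. Conversely, a covered `G` in that union with `s(G) < s(B k)` is
a blocking coalition, because every bin it draws from is uncovered or has size `≥ s(B k)`.
-/

variable {n : ℕ} {a : Fin n → ℕ} {b : ℕ}

lemma binSize_mono {S T : Finset (Fin n)} (h : S ⊆ T) : binSize a S ≤ binSize a T :=
  sum_le_sum_of_subset h

section Partition

variable {π : Finpartition (univ : Finset (Fin n))}

lemma mem_uncoveredBin_iff {j : Fin n} :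
    j ∈ uncoveredBin a b π ↔ binSize a (π.part j) < b := by
  constructor
  · intro hj
    obtain ⟨U, hU, hjU⟩ := mem_sup.mp hj
    rw [mem_filter] at hU
    rw [π.part_eq_of_mem hU.1 hjU]
    exact hU.2
  · intro hj
    exact mem_sup.mpr ⟨π.part j, mem_filter.mpr ⟨π.part_mem.mpr (mem_univ j), hj⟩,
      π.mem_part_self.mpr (mem_univ j)⟩

lemma binSize_uncoveredBin_lt (hb : 0 < b) (hres : Reasonable a b π) :
    binSize a (uncoveredBin a b π) < b := by
  obtain h | ⟨U, hU⟩ := (π.parts.filter fun C => binSize a C < b).eq_empty_or_nonempty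
  · rw [uncoveredBin, h]
    simpa [binSize] using hb
  · have hsingleton : (π.parts.filter fun C => binSize a C < b) = {U} :=
      eq_singleton_iff_unique_mem.mpr ⟨hU, fun C hC => card_le_one.mp hres C hC U hU⟩
    rw [uncoveredBin, hsingleton, sup_singleton, id]
    exact (mem_filter.mp hU).2

def binsFrom {m : ℕ} (B : Fin m → Finset (Fin n)) (k : Fin m) : Finset (Fin n) :=
  (univ.filter fun l => k ≤ l).biUnion B

lemma mem_binsFrom {m : ℕ} {B : Fin m → Finset (Fin n)} {k : Fin m} {j : Fin n} :
    j ∈ binsFrom B k ↔ ∃ l, k ≤ l ∧ j ∈ B l := by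
  simp [binsFrom]

variable {m : ℕ} {B : Fin m → Finset (Fin n)}

lemma isMinSubset_of_isSNE (hmem : ∀ k, B k ∈ π.parts ∧ b ≤ binSize a (B k))
    (hsorted : ∀ k l, k ≤ l → binSize a (B k) ≤ binSize a (B l))
    (hsne : IsSNE a b π) (k : Fin m) :
    IsMinSubset a b (B k) (binsFrom B k ∪ uncoveredBin a b π) := by
  refine ⟨fun j hj => mem_union_left _ (mem_binsFrom.mpr ⟨k, le_rfl, hj⟩), (hmem k).2, ?_⟩
  intro G hG hGb
  by_contra! hlt
  refine hsne ⟨G, hGb, fun j hj => ?_⟩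
  rcases mem_union.mp (hG hj) with hjB | hjU
  · obtain ⟨l, hkl, hjl⟩ := mem_binsFrom.mp hjB
    rw [π.part_eq_of_mem (hmem l).1 hjl]
    exact Or.inr (hlt.trans_le (hsorted k l hkl))
  · exact Or.inl (mem_uncoveredBin_iff.mp hjU)

lemma mem_uncoveredBin_or_exists_mem
    (hall : ∀ C ∈ π.parts, b ≤ binSize a C → ∃ k, B k = C) (j : Fin n) :
    j ∈ uncoveredBin a b π ∨ ∃ l, j ∈ B l := by
  by_cases hcov : b ≤ binSize a (π.part j)
  · obtain ⟨l, hl⟩ := hall _ (π.part_mem.mpr (mem_univ j)) hcov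
    exact Or.inr ⟨l, hl ▸ π.mem_part_self.mpr (mem_univ j)⟩
  · exact Or.inl (mem_uncoveredBin_iff.mpr (not_le.mp hcov))

lemma isSNE_of_isMinSubset (hb : 0 < b) (hres : Reasonable a b π)
    (hmem : ∀ k, B k ∈ π.parts ∧ b ≤ binSize a (B k))
    (hall : ∀ C ∈ π.parts, b ≤ binSize a C → ∃ k, B k = C)
    (hmin : ∀ k, IsMinSubset a b (B k) (binsFrom B k ∪ uncoveredBin a b π)) :
    IsSNE a b π := by
  rintro ⟨S, hSb, hS⟩
  by_cases hmeets : ∃ l, (B l ∩ S).Nonempty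
  · obtain ⟨k, hk, hfirst⟩ := wellFounded_lt.has_min {l | (B l ∩ S).Nonempty} hmeets
    obtain ⟨j, hj⟩ := hk
    obtain ⟨hjk, hjS⟩ := mem_inter.mp hj
    have hpart : π.part j = B k := π.part_eq_of_mem (hmem k).1 hjk
    have hSlt : binSize a S < binSize a (B k) := by
      simpa only [hpart, not_lt.mpr (hmem k).2, false_or] using hS j hjS
    have hsub : S ⊆ binsFrom B k ∪ uncoveredBin a b π := by
      intro i hi
      rcases mem_uncoveredBin_or_exists_mem hall i with hiU | ⟨l, hil⟩
      · exact mem_union_right _ hiU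
      · exact mem_union_left _ (mem_binsFrom.mpr
          ⟨l, not_lt.mp (hfirst l ⟨i, mem_inter.mpr ⟨hil, hi⟩⟩), hil⟩)
    exact (hSlt.trans_le ((hmin k).2.2 S hsub hSb)).false
  · have hsub : S ⊆ uncoveredBin a b π := fun i hi =>
      (mem_uncoveredBin_or_exists_mem hall i).resolve_right
        fun ⟨l, hil⟩ => hmeets ⟨l, i, mem_inter.mpr ⟨hil, hi⟩⟩
    exact (hSb.trans (binSize_mono hsub)).not_gt (binSize_uncoveredBin_lt hb hres)

end Partition

theorem stmt10_general (n : ℕ) (hn : 1 ≤ n) (a : Fin n → ℕ) (b : ℕ)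
    (hab : ∀ j, a j < b)
    (π : Finpartition (univ : Finset (Fin n))) (hres : Reasonable a b π)
    (m : ℕ) (B : Fin m → Finset (Fin n))
    (hmem : ∀ k : Fin m, B k ∈ π.parts ∧ b ≤ binSize a (B k))
    (hall : ∀ C ∈ π.parts, b ≤ binSize a C → ∃ k : Fin m, B k = C)
    (hsorted : ∀ k l : Fin m, k ≤ l → binSize a (B k) ≤ binSize a (B l)) :
    IsSNE a b π ↔
      ∀ k : Fin m,
        IsMinSubset a b (B k)
          ((univ.filter fun l : Fin m => k ≤ l).biUnion B ∪ uncoveredBin a b π) := by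
  have hb : 0 < b := (Nat.zero_le _).trans_lt (hab ⟨0, hn⟩)
  exact ⟨isMinSubset_of_isSNE hmem hsorted, isSNE_of_isMinSubset hb hres hmem hall⟩

/-- characterization of SNE.  If the covered bins of a reasonable
partition are enumerated as `B 0, …, B (m-1)` in nondecreasing order of size, then
`π` is an SNE iff each `B k` is a minimum subset w.r.t. the union of the bins of
index `≥ k` together with the unique uncovered bin (if any). -/
theorem stmt10 (n : ℕ) (hn : 1 ≤ n) (a : Fin n → ℕ) (b : ℕ)
    (ha : ∀ j, 0 < a j) (hab : ∀ j, a j < b)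
    (π : Finpartition (univ : Finset (Fin n))) (hres : Reasonable a b π)
    (m : ℕ) (B : Fin m → Finset (Fin n))
    (hinj : Function.Injective B)
    (hmem : ∀ k : Fin m, B k ∈ π.parts ∧ b ≤ binSize a (B k))
    (hall : ∀ C ∈ π.parts, b ≤ binSize a C → ∃ k : Fin m, B k = C)
    (hsorted : ∀ k l : Fin m, k ≤ l → binSize a (B k) ≤ binSize a (B l)) :
    IsSNE a b π ↔
      ∀ k : Fin m,
        IsMinSubset a b (B k)
          ((univ.filter fun l : Fin m => k ≤ l).biUnion B ∪ uncoveredBin a b π) :=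
  stmt10_general n hn a b hab π hres m B hmem hall hsorted
end

section
/- Every instance of selfish bin covering admits a reasonable partition that is a strong Nash equilibrium (SNE). -/
open Finset

/-!
A potential argument. Weigh a covered bin of size `s` by `(n + 1) ^ (S + 1 - s)`, where `S` is the
total size of all items, and an uncovered bin by `0`. When a covered coalition `B` forms its own bin,
every bin it takes members from was uncovered or larger than `B`, so the at most `n` covered bins it
damages lose less weight together than the new bin `B` brings in: the total weight strictly
increases. Merging two uncovered bins does not decrease the total weight and reduces the number of
bins. Hence a partition of maximal weight that has the fewest bins among those is a reasonable SNE.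
-/

lemma exists_max_with_min_tiebreak {ι β γ : Type*} [Fintype ι] [Nonempty ι] [LinearOrder β]
    [LinearOrder γ] (f : ι → β) (g : ι → γ) :
    ∃ x, (∀ y, f y ≤ f x) ∧ ∀ y, f x ≤ f y → g x ≤ g y := by
  obtain ⟨x₀, -, hx₀⟩ := exists_max_image univ f univ_nonempty
  obtain ⟨x, hx, hmin⟩ := exists_min_image {x | f x₀ ≤ f x} g ⟨x₀, by simp⟩
  have hmax : ∀ y, f y ≤ f x := fun y => (hx₀ y (mem_univ _)).trans (mem_filter.1 hx).2
  exact ⟨x, hmax, fun y hy => hmin y (mem_filter.2 ⟨mem_univ _, (hmax x₀).trans hy⟩)⟩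

namespace Finpartition

variable {α : Type*} [DecidableEq α] {s B : Finset α}

def regroup (π : Finpartition s) (hBs : B ⊆ s) (hB : B.Nonempty) : Finpartition s :=
  (π.avoid B).extend hB.ne_empty disjoint_sdiff_self_left (sdiff_sup_cancel hBs)

lemma card_regroup_le (π : Finpartition s) (hBs : B ⊆ s) (hB : B.Nonempty) :
    #(π.regroup hBs hB).parts ≤ #(π.parts.filter fun C => ¬ C ⊆ B) + 1 := by
  rw [regroup, card_extend, Nat.add_le_add_iff_right]
  calc #(π.avoid B).parts ≤ #((π.parts.filter fun C => ¬ C ⊆ B).image (· \ B)) := by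
        refine card_le_card fun P hP => ?_
        obtain ⟨C, hC, hCB, rfl⟩ := π.mem_avoid.1 hP
        exact mem_image_of_mem _ (mem_filter.2 ⟨hC, hCB⟩)
    _ ≤ _ := card_image_le

end Finpartition

namespace SelfishBinCovering

variable {n : ℕ} {a : Fin n → ℕ} {b : ℕ}

variable (a b) in
def binWeight (B : Finset (Fin n)) : ℕ :=
  if b ≤ binSize a B then (n + 1) ^ (binSize a univ + 1 - binSize a B) else 0

variable (a b) in
def potential (π : Finpartition (univ : Finset (Fin n))) : ℕ :=
  ∑ C ∈ π.parts, binWeight a b C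

lemma binWeight_of_lt {B : Finset (Fin n)} (h : binSize a B < b) : binWeight a b B = 0 :=
  if_neg h.not_ge

lemma binWeight_empty (hb : 0 < b) : binWeight a b ∅ = 0 :=
  binWeight_of_lt (by simpa [binSize] using hb)

lemma binWeight_le_of_lt {B C : Finset (Fin n)} (hBC : binSize a B < binSize a C) :
    binWeight a b C ≤ (n + 1) ^ (binSize a univ - binSize a B) := by
  unfold binWeight
  split_ifs
  · have : binSize a C ≤ binSize a univ := sum_le_sum_of_subset (subset_univ C)
    exact Nat.pow_le_pow_right n.succ_pos (by omega)
  · exact Nat.zero_le _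

lemma potential_regroup (hb : 0 < b) (π : Finpartition (univ : Finset (Fin n)))
    {B : Finset (Fin n)} (hB : B.Nonempty) :
    potential a b (π.regroup (subset_univ B) hB) =
      binWeight a b B + ∑ C ∈ π.parts, binWeight a b (C \ B) := by
  have hBnot : B ∉ (π.avoid B).parts := fun h =>
    hB.ne_empty <| disjoint_self.1 <|
      (disjoint_sdiff_self_left (y := univ)).mono_left ((π.avoid B).le h)
  rw [potential, Finpartition.regroup, Finpartition.extend_parts, sum_insert hBnot]
  congr 1
  rw [show (π.avoid B).parts = (π.parts.image (· \ B)).erase ∅ from rfl,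
    sum_erase _ (binWeight_empty hb), sum_image_of_disjoint (binWeight_empty hb)]
  exact π.disjoint.mono fun C => sdiff_subset

lemma potential_lt_regroup (hb : 0 < b) (π : Finpartition (univ : Finset (Fin n)))
    {B : Finset (Fin n)} (hB : B.Nonempty) (hcov : b ≤ binSize a B)
    (hblock : ∀ j ∈ B, binSize a (π.part j) < b ∨ binSize a B < binSize a (π.part j)) :
    potential a b π < potential a b (π.regroup (subset_univ B) hB) := by
  set N := (n + 1) ^ (binSize a univ - binSize a B)
  have hpart : ∀ C ∈ π.parts, binWeight a b C ≤ binWeight a b (C \ B) + N := by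
    intro C hC
    by_cases hCB : Disjoint C B
    · rw [hCB.sdiff_eq_left]; exact Nat.le_add_right _ _
    obtain ⟨j, hjC, hjB⟩ := not_disjoint_iff.1 hCB
    rw [← π.part_eq_of_mem hC hjC]
    refine le_add_left ?_
    rcases hblock j hjB with hunc | hbig
    · rw [binWeight_of_lt hunc]; exact Nat.zero_le _
    · exact binWeight_le_of_lt hbig
  have hcard : #π.parts ≤ n := by simpa using π.card_parts_le_card
  have hBweight : binWeight a b B = N * (n + 1) := by
    have : binSize a B ≤ binSize a univ := sum_le_sum_of_subset (subset_univ B)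
    rw [binWeight, if_pos hcov, Nat.sub_add_comm this, pow_succ]
  calc potential a b π ≤ ∑ C ∈ π.parts, (binWeight a b (C \ B) + N) := sum_le_sum hpart
    _ = ∑ C ∈ π.parts, binWeight a b (C \ B) + #π.parts * N := by
        rw [sum_add_distrib, sum_const, smul_eq_mul]
    _ < binWeight a b B + ∑ C ∈ π.parts, binWeight a b (C \ B) := by
        rw [hBweight]
        have : #π.parts * N < N * (n + 1) := by
          rw [mul_comm]; exact Nat.mul_lt_mul_of_pos_left (by omega) (by positivity)
        omega
    _ = potential a b (π.regroup (subset_univ B) hB) := (potential_regroup hb π hB).symm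

lemma exists_fewer_parts_of_uncovered (hb : 0 < b) (π : Finpartition (univ : Finset (Fin n)))
    {C D : Finset (Fin n)} (hC : C ∈ π.parts) (hD : D ∈ π.parts) (hCD : C ≠ D)
    (hCu : binSize a C < b) (hDu : binSize a D < b) :
    ∃ π' : Finpartition (univ : Finset (Fin n)),
      potential a b π ≤ potential a b π' ∧ #π'.parts < #π.parts := by
  have hunion : (C ∪ D).Nonempty := (π.nonempty_of_mem_parts hC).mono subset_union_left
  refine ⟨π.regroup (subset_univ _) hunion, ?_, ?_⟩
  · have hrest : ∑ E ∈ π.parts, binWeight a b (E \ (C ∪ D)) = potential a b π := by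
      refine sum_congr rfl fun E hE => ?_
      by_cases hEC : E = C
      · rw [hEC, sdiff_eq_empty_iff_subset.2 subset_union_left, binWeight_empty hb,
          binWeight_of_lt hCu]
      by_cases hED : E = D
      · rw [hED, sdiff_eq_empty_iff_subset.2 subset_union_right, binWeight_empty hb,
          binWeight_of_lt hDu]
      have hdisj : Disjoint E (C ∪ D) :=
        disjoint_union_right.2 ⟨π.disjoint hE hC hEC, π.disjoint hE hD hED⟩
      rw [hdisj.sdiff_eq_left]
    rw [potential_regroup hb, hrest]
    exact Nat.le_add_left _ _
  · have hrest : #(π.parts.filter fun E => ¬ E ⊆ C ∪ D) ≤ #((π.parts.erase C).erase D) := by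
      refine card_le_card fun E hE => ?_
      obtain ⟨hE, hEsub⟩ := mem_filter.1 hE
      refine mem_erase.2 ⟨?_, mem_erase.2 ⟨?_, hE⟩⟩ <;> rintro rfl <;> simp at hEsub
    have htwo : 1 < #π.parts := one_lt_card.2 ⟨C, hC, D, hD, hCD⟩
    have := π.card_regroup_le (subset_univ _) hunion
    rw [card_erase_of_mem (mem_erase.2 ⟨hCD.symm, hD⟩), card_erase_of_mem hC] at hrest
    omega

lemma isSNE_of_potential_maximal (hb : 0 < b) {π : Finpartition (univ : Finset (Fin n))}
    (hmax : ∀ π', potential a b π' ≤ potential a b π) : IsSNE a b π := by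
  rintro ⟨B, hcov, hblock⟩
  have hB : B.Nonempty := nonempty_iff_ne_empty.2 fun h => by
    rw [h, binSize, sum_empty] at hcov; omega
  exact (potential_lt_regroup hb π hB hcov hblock).not_ge (hmax _)

lemma reasonable_of_fewest_parts (hb : 0 < b) {π : Finpartition (univ : Finset (Fin n))}
    (hfewest : ∀ π', potential a b π ≤ potential a b π' → #π.parts ≤ #π'.parts) :
    Reasonable a b π := by
  by_contra h
  obtain ⟨C, hC, D, hD, hCD⟩ := one_lt_card.1 (not_le.1 h)
  rw [mem_filter] at hC hD
  obtain ⟨π', hle, hlt⟩ := exists_fewer_parts_of_uncovered hb π hC.1 hD.1 hCD hC.2 hD.2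
  exact hlt.not_ge (hfewest π' hle)

end SelfishBinCovering

theorem stmt11_general (n : ℕ) (hn : 1 ≤ n) (a : Fin n → ℕ) (b : ℕ)
    (hab : ∀ j, a j < b) :
    ∃ π : Finpartition (univ : Finset (Fin n)),
      Reasonable a b π ∧ IsSNE a b π := by
  have hb : 0 < b := (Nat.zero_le _).trans_lt (hab ⟨0, hn⟩)
  obtain ⟨π, hmax, hfewest⟩ :=
    exists_max_with_min_tiebreak (SelfishBinCovering.potential a b) (#·.parts)
  exact ⟨π, SelfishBinCovering.reasonable_of_fewest_parts hb hfewest,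
    SelfishBinCovering.isSNE_of_potential_maximal hb hmax⟩

/-- every instance admits a reasonable partition that is an SNE. -/
theorem stmt11 (n : ℕ) (hn : 1 ≤ n) (a : Fin n → ℕ) (b : ℕ)
    (ha : ∀ j, 0 < a j) (hab : ∀ j, a j < b) :
    ∃ π : Finpartition (univ : Finset (Fin n)),
      Reasonable a b π ∧ IsSNE a b π :=
  stmt11_general n hn a b hab
end

section
/- Every reasonable partition that is a strong Nash equilibrium (SNE) is rational; that is, every covered bin of a reasonable SNE is minimal covered. -/
open Finset

theorem IsSNE.minimalCovered {n : ℕ} {a : Fin n → ℕ} {b : ℕ}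
    {π : Finpartition (univ : Finset (Fin n))} (hsne : IsSNE a b π) (ha : ∀ j, 0 < a j)
    {B : Finset (Fin n)} (hB : B ∈ π.parts) (hcov : b ≤ binSize a B) :
    MinimalCovered a b B := by
  refine ⟨hcov, fun j hj => ?_⟩
  by_contra! hcov'
  -- the items of `B.erase j` would all move to this smaller, still covered bin
  refine hsne ⟨B.erase j, hcov', fun k hk => Or.inr ?_⟩
  rw [π.part_eq_of_mem hB (mem_of_mem_erase hk)]
  exact sum_erase_lt_of_pos hj (ha j)

theorem stmt12_general (n : ℕ) (a : Fin n → ℕ) (b : ℕ)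
    (ha : ∀ j, 0 < a j)
    (π : Finpartition (univ : Finset (Fin n)))
    (hres : Reasonable a b π) (hsne : IsSNE a b π) :
    RationalPartition a b π :=
  ⟨hres, fun _ hB hcov => hsne.minimalCovered ha hB hcov⟩

/-- every reasonable SNE is rational. -/
theorem stmt12 (n : ℕ) (hn : 1 ≤ n) (a : Fin n → ℕ) (b : ℕ)
    (ha : ∀ j, 0 < a j) (hab : ∀ j, a j < b)
    (π : Finpartition (univ : Finset (Fin n)))
    (hres : Reasonable a b π) (hsne : IsSNE a b π) :
    RationalPartition a b π :=
  stmt12_general n a b ha π hres hsne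
end

section
/- For every integer n ≥ 2, consider the instance of selfish bin covering with bin volume b = 2n, 2n items of size 2n−1, and 2n items of size 2. Every reasonable strong Nash equilibrium (SNE) π of this instance satisfies p(π) = n+2, while OPT = 2n. Consequently, both the price of anarchy and the price of stability with respect to SNE are at most 1/2. -/
open Finset

/-! In a strong Nash equilibrium every covered set `B` contains an item whose bin is covered and
no larger than `B`. Any `n` small items have total size exactly `b = 2n`, so fewer than `n` small
items lie outside bins of size exactly `2n`; such bins consist of `n` small items, and counting
forces the `2n` small items into exactly two of them. Bins of big items then hold only big items,
hence have size `(2n - 1) k`. Any two big items form a covered set of size `2(2n - 1)`, so at most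
one big item is outside a bin of exactly two big items, and counting puts all of them into `n`
pairs: the welfare is `n + 2`. On the other hand every item is smaller than `b`, so each covered
bin holds at least two of the `4n` items, and pairing each big item with a small one attains
`2n`. -/

lemma Finset.card_filter_not_lt_of_forall_exists {α : Type*} {s : Finset α} {p : α → Prop}
    [DecidablePred p] {k : ℕ} (h : ∀ D ⊆ s, #D = k → ∃ j ∈ D, p j) :
    #{j ∈ s | ¬ p j} < k := by
  by_contra! hk
  obtain ⟨D, hD, hDk⟩ := Finset.exists_subset_card_eq hk
  obtain ⟨j, hj, hpj⟩ := h D (hD.trans (filter_subset _ _)) hDk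
  exact (mem_filter.1 (hD hj)).2 hpj

namespace Finpartition

variable {α : Type*} [Fintype α] [DecidableEq α] (π : Finpartition (univ : Finset α))

lemma card_biUnion_of_forall_card_eq {Q : Finset (Finset α)} (hQ : Q ⊆ π.parts) {m : ℕ}
    (hm : ∀ B ∈ Q, #B = m) : #(Q.biUnion id) = m * #Q := by
  rw [card_biUnion (π.disjoint.subset hQ)]
  exact (sum_congr rfl hm).trans (by rw [sum_const, smul_eq_mul, mul_comm])

lemma mul_card_filter_parts_eq {S : Finset α} {P : Finset α → Prop} [DecidablePred P] {m : ℕ}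
    (hP : ∀ B ∈ π.parts, P B → B ⊆ S ∧ #B = m) (hm : m ∣ #S)
    (hbad : #{j ∈ S | ¬ P (π.part j)} < m) :
    m * #{B ∈ π.parts | P B} = #S ∧ ∀ j ∈ S, P (π.part j) := by
  set Q := {B ∈ π.parts | P B}
  have hQ : Q ⊆ π.parts := filter_subset _ _
  have hU : #(Q.biUnion id) = m * #Q :=
    π.card_biUnion_of_forall_card_eq hQ fun B hB ↦ (hP B (hQ hB) (mem_filter.1 hB).2).2
  have hUS : Q.biUnion id ⊆ S := by
    simp only [biUnion_subset, id]
    exact fun B hB ↦ (hP B (hQ hB) (mem_filter.1 hB).2).1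
  have hgood : {j ∈ S | P (π.part j)} ⊆ Q.biUnion id := fun j hj ↦
    mem_biUnion.2 ⟨π.part j, mem_filter.2 ⟨π.part_mem.2 (mem_univ j), (mem_filter.1 hj).2⟩,
      π.mem_part_self.2 (mem_univ j)⟩
  -- `m * #Q ≤ #S < m * #Q + m`, and `m ∣ #S` leaves only `#S = m * #Q`.
  have hsplit := card_filter_add_card_filter_not (s := S) fun j ↦ P (π.part j)
  have hle := card_le_card hUS
  have hlt := card_le_card hgood
  obtain ⟨c, hc⟩ := hm
  have hcQ : c = #Q := by
    have := Nat.lt_of_mul_lt_mul_left (a := m)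
      (show m * c < m * (#Q + 1) by rw [mul_add_one]; omega)
    have := Nat.le_of_mul_le_mul_left (show m * #Q ≤ m * c by omega) (by omega)
    omega
  have hUeq : Q.biUnion id = S := eq_of_subset_of_card_le hUS (by rw [hU, hc, hcQ])
  refine ⟨by rw [hc, hcQ], fun j hj ↦ ?_⟩
  obtain ⟨B, hB, hjB⟩ := mem_biUnion.1 (hUeq ▸ hj)
  rw [π.part_eq_of_mem (hQ hB) hjB]
  exact (mem_filter.1 hB).2

end Finpartition

section Welfare

variable {N : ℕ} {a : Fin N → ℕ} {b : ℕ} {π : Finpartition (univ : Finset (Fin N))}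

lemma IsSNE.exists_mem_le (hπ : IsSNE a b π) {B : Finset (Fin N)} (hB : b ≤ binSize a B) :
    ∃ j ∈ B, b ≤ binSize a (π.part j) ∧ binSize a (π.part j) ≤ binSize a B := by
  unfold IsSNE at hπ
  push Not at hπ
  exact hπ B hB

lemma welfare_eq_card_parts (h : ∀ B ∈ π.parts, b ≤ binSize a B) :
    welfare a b π = #π.parts := by
  rw [welfare, filter_true_of_mem h]

lemma two_mul_welfare_le (ha : ∀ j, a j < b) (π : Finpartition (univ : Finset (Fin N))) :
    2 * welfare a b π ≤ N := by
  set C := {B ∈ π.parts | b ≤ binSize a B}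
  have hC : ∀ B ∈ C, 2 ≤ #B := by
    intro B hB
    obtain ⟨hBπ, hcov⟩ := mem_filter.1 hB
    by_contra! h
    have hB1 : #B = 1 := by have := (π.nonempty_of_mem_parts hBπ).card_pos; omega
    obtain ⟨j, rfl⟩ := card_eq_one.1 hB1
    simp only [binSize, sum_singleton] at hcov
    exact (ha j).not_ge hcov
  calc 2 * welfare a b π = #C • 2 := by rw [welfare, smul_eq_mul, mul_comm]
    _ ≤ ∑ B ∈ C, #B := card_nsmul_le_sum _ _ _ hC
    _ ≤ ∑ B ∈ π.parts, #B := sum_le_sum_of_subset (filter_subset _ _)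
    _ = N := by rw [π.sum_card_parts, card_univ, Fintype.card_fin]

end Welfare

lemma Nat.mod_eq_iff_of_lt_two_mul {x r m : ℕ} (hx : x < 2 * m) (hr : r < m) :
    x % m = r ↔ x = r ∨ x = r + m := by
  rcases lt_or_ge x m with h | h
  · rw [Nat.mod_eq_of_lt h]
    omega
  · rw [Nat.mod_eq_sub_mod h, Nat.mod_eq_of_lt (by omega)]
    omega

namespace HalfWelfareInstance

variable (n : ℕ)

def size : Fin (4 * n) → ℕ := fun j ↦ if (j : ℕ) < 2 * n then 2 * n - 1 else 2

def big : Finset (Fin (4 * n)) := {j | (j : ℕ) < 2 * n}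

variable {n}

lemma mem_big {j : Fin (4 * n)} : j ∈ big n ↔ (j : ℕ) < 2 * n := by
  simp [big]

lemma card_big : #(big n) = 2 * n := by
  rw [big, Fin.card_filter_val_lt]
  omega

lemma card_compl_big : #(big n)ᶜ = 2 * n := by
  rw [card_compl, Fintype.card_fin, card_big]
  omega

lemma binSize_size (B : Finset (Fin (4 * n))) :
    binSize (size n) B = (2 * n - 1) * #(B ∩ big n) + 2 * #(B \ big n) := by
  have h1 : B.filter (fun j : Fin (4 * n) ↦ (j : ℕ) < 2 * n) = B ∩ big n := by
    ext; simp [big]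
  have h2 : B.filter (fun j : Fin (4 * n) ↦ ¬ (j : ℕ) < 2 * n) = B \ big n := by
    ext; simp [big]
  unfold binSize size
  rw [sum_ite, sum_const, sum_const, smul_eq_mul, smul_eq_mul, h1, h2]
  ring

lemma binSize_size_of_subset_big {B : Finset (Fin (4 * n))} (hB : B ⊆ big n) :
    binSize (size n) B = (2 * n - 1) * #B := by
  rw [binSize_size, inter_eq_left.2 hB, sdiff_eq_empty_iff_subset.2 hB, card_empty, mul_zero,
    add_zero]

lemma binSize_size_of_subset_compl_big {B : Finset (Fin (4 * n))} (hB : B ⊆ (big n)ᶜ) :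
    binSize (size n) B = 2 * #B := by
  have hdisj : Disjoint B (big n) := subset_compl_iff_disjoint_right.1 hB
  rw [binSize_size, disjoint_iff_inter_eq_empty.1 hdisj, sdiff_eq_self_of_disjoint hdisj,
    card_empty, mul_zero, zero_add]

lemma subset_compl_big_of_binSize_size_eq (hn : 2 ≤ n) {B : Finset (Fin (4 * n))}
    (hB : binSize (size n) B = 2 * n) : B ⊆ (big n)ᶜ ∧ #B = n := by
  have hbig : #(B ∩ big n) = 0 := by
    rw [binSize_size] at hB
    generalize #(B ∩ big n) = k at hB ⊢
    rcases k with _ | _ | k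
    · rfl
    · omega
    · have : (2 * n - 1) * 2 ≤ (2 * n - 1) * (k + 2) := Nat.mul_le_mul_left _ (by omega)
      generalize (2 * n - 1) * (k + 1 + 1) = t at hB this
      omega
  have hsub : B ⊆ (big n)ᶜ := by
    rwa [card_eq_zero, ← disjoint_iff_inter_eq_empty, ← subset_compl_iff_disjoint_right] at hbig
  refine ⟨hsub, ?_⟩
  rw [binSize_size_of_subset_compl_big hsub] at hB
  omega

lemma eq_two_of_two_mul_le_of_le (hn : 0 < n) {k : ℕ} (h₁ : 2 * n ≤ (2 * n - 1) * k)
    (h₂ : (2 * n - 1) * k ≤ 2 * (2 * n - 1)) : k = 2 := by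
  have hk : k ≤ 2 :=
    Nat.le_of_mul_le_mul_left (show (2 * n - 1) * k ≤ (2 * n - 1) * 2 by linarith) (by omega)
  interval_cases k <;> omega

section StrongNash

variable (hn : 2 ≤ n) {π : Finpartition (univ : Finset (Fin (4 * n)))}
  (hπ : IsSNE (size n) (2 * n) π)
include hn hπ

lemma binSize_part_of_mem_compl_big :
    n * #{B ∈ π.parts | binSize (size n) B = 2 * n} = 2 * n ∧
      ∀ j ∈ (big n)ᶜ, binSize (size n) (π.part j) = 2 * n := by
  have hbad : ∀ D ⊆ (big n)ᶜ, #D = n →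
      ∃ j ∈ D, binSize (size n) (π.part j) = 2 * n := by
    intro D hD hDn
    have hsize : binSize (size n) D = 2 * n := by rw [binSize_size_of_subset_compl_big hD, hDn]
    obtain ⟨j, hj, hcov, hle⟩ := hπ.exists_mem_le hsize.ge
    exact ⟨j, hj, le_antisymm (hsize ▸ hle) hcov⟩
  obtain ⟨hcard, hall⟩ := π.mul_card_filter_parts_eq
    (fun B _ hB ↦ subset_compl_big_of_binSize_size_eq hn hB)
    ⟨2, by rw [card_compl_big, mul_comm]⟩ (card_filter_not_lt_of_forall_exists hbad)
  exact ⟨hcard.trans card_compl_big, hall⟩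

lemma part_subset_big {j : Fin (4 * n)} (hj : j ∈ big n) : π.part j ⊆ big n := by
  intro i hi
  by_contra hi'
  have hsize := (binSize_part_of_mem_compl_big hn hπ).2 i (mem_compl.2 hi')
  rw [π.part_eq_of_mem (π.part_mem.2 (mem_univ j)) hi] at hsize
  exact mem_compl.1 ((subset_compl_big_of_binSize_size_eq hn hsize).1
    (π.mem_part_self.2 (mem_univ j))) hj

lemma binSize_part_of_mem_big :
    2 * #{B ∈ π.parts | binSize (size n) B = 2 * (2 * n - 1)} = 2 * n ∧
      ∀ j ∈ big n, binSize (size n) (π.part j) = 2 * (2 * n - 1) := by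
  have hpart : ∀ j ∈ big n, binSize (size n) (π.part j) = (2 * n - 1) * #(π.part j) :=
    fun j hj ↦ binSize_size_of_subset_big (part_subset_big hn hπ hj)
  have hpure : ∀ B ∈ π.parts,
      binSize (size n) B = 2 * (2 * n - 1) → B ⊆ big n ∧ #B = 2 := by
    intro B hB hsize
    obtain ⟨j, hj⟩ := π.nonempty_of_mem_parts hB
    rw [← π.part_eq_of_mem hB hj] at hsize ⊢
    by_cases hjbig : j ∈ big n
    · refine ⟨part_subset_big hn hπ hjbig,
        Nat.eq_of_mul_eq_mul_left (show 0 < 2 * n - 1 by omega) ?_⟩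
      rw [← hpart j hjbig, hsize, mul_comm]
    · have := (binSize_part_of_mem_compl_big hn hπ).2 j (mem_compl.2 hjbig)
      omega
  have hbad : ∀ D ⊆ big n, #D = 2 →
      ∃ j ∈ D, binSize (size n) (π.part j) = 2 * (2 * n - 1) := by
    intro D hD hD2
    have hsize : binSize (size n) D = 2 * (2 * n - 1) := by
      rw [binSize_size_of_subset_big hD, hD2, mul_comm]
    obtain ⟨j, hj, hcov, hle⟩ := hπ.exists_mem_le (show 2 * n ≤ binSize (size n) D by omega)
    rw [hpart j (hD hj)] at hcov hle
    refine ⟨j, hj, ?_⟩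
    rw [hpart j (hD hj), eq_two_of_two_mul_le_of_le (by omega) hcov (hsize ▸ hle), mul_comm]
  obtain ⟨hcard, hall⟩ := π.mul_card_filter_parts_eq hpure ⟨n, by rw [card_big]⟩
    (card_filter_not_lt_of_forall_exists hbad)
  exact ⟨hcard.trans card_big, hall⟩

lemma welfare_of_isSNE : welfare (size n) (2 * n) π = n + 2 := by
  obtain ⟨hsmallCard, hsmall⟩ := binSize_part_of_mem_compl_big hn hπ
  obtain ⟨hbigCard, hbig⟩ := binSize_part_of_mem_big hn hπ
  have hparts : ∀ B ∈ π.parts,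
      binSize (size n) B = 2 * n ∨ binSize (size n) B = 2 * (2 * n - 1) := by
    intro B hB
    obtain ⟨j, hj⟩ := π.nonempty_of_mem_parts hB
    rw [← π.part_eq_of_mem hB hj]
    by_cases hjbig : j ∈ big n
    · exact Or.inr (hbig j hjbig)
    · exact Or.inl (hsmall j (mem_compl.2 hjbig))
  have hrest : {B ∈ π.parts | ¬ binSize (size n) B = 2 * n}
      = {B ∈ π.parts | binSize (size n) B = 2 * (2 * n - 1)} :=
    filter_congr fun B hB ↦ by rcases hparts B hB with h | h <;> omega
  rw [welfare_eq_card_parts fun B hB ↦ by rcases hparts B hB with h | h <;> omega,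
    ← card_filter_add_card_filter_not fun B ↦ binSize (size n) B = 2 * n, hrest]
  have := Nat.eq_of_mul_eq_mul_left (show 0 < n by omega) (hsmallCard.trans (mul_comm 2 n))
  omega

end StrongNash

lemma welfare_size_le (hn : 2 ≤ n) (σ : Finpartition (univ : Finset (Fin (4 * n)))) :
    welfare (size n) (2 * n) σ ≤ 2 * n := by
  have := two_mul_welfare_le (a := size n) (b := 2 * n)
    (fun j ↦ by unfold size; split_ifs <;> omega) σ
  omega

variable (n) in
open Classical in
noncomputable def pairing : Finpartition (univ : Finset (Fin (4 * n))) :=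
  Finpartition.ofSetoid (Setoid.ker fun j : Fin (4 * n) ↦ (j : ℕ) % (2 * n))

lemma exists_pairing_part_eq (hn : 0 < n) (j : Fin (4 * n)) :
    ∃ x ∈ big n, ∃ y ∉ big n, (pairing n).part j = {x, y} := by
  have hr : (j : ℕ) % (2 * n) < 2 * n := Nat.mod_lt _ (by omega)
  refine ⟨⟨j % (2 * n), by omega⟩, mem_big.2 hr, ⟨j % (2 * n) + 2 * n, by omega⟩,
    fun h ↦ by simp [mem_big] at h, ?_⟩
  classical
  ext x
  rw [pairing, Finpartition.mem_part_ofSetoid_iff_rel, Setoid.ker_def, eq_comm,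
    Nat.mod_eq_iff_of_lt_two_mul (by omega) hr]
  simp [Fin.ext_iff]

lemma welfare_pairing (hn : 0 < n) : welfare (size n) (2 * n) (pairing n) = 2 * n := by
  have hparts : ∀ B ∈ (pairing n).parts, binSize (size n) B = 2 * n + 1 ∧ #B = 2 := by
    intro B hB
    obtain ⟨j, hj⟩ := (pairing n).nonempty_of_mem_parts hB
    obtain ⟨x, hx, y, hy, hxy⟩ := exists_pairing_part_eq hn j
    have hne : x ≠ y := by rintro rfl; exact hy hx
    rw [← (pairing n).part_eq_of_mem hB hj, hxy]
    refine ⟨?_, card_pair hne⟩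
    simp only [binSize, sum_pair hne, size, mem_big.1 hx, if_true, if_neg (mt mem_big.2 hy)]
    omega
  have hcard := (pairing n).sum_card_parts
  rw [sum_congr rfl fun B hB ↦ (hparts B hB).2, sum_const, smul_eq_mul, card_univ,
    Fintype.card_fin] at hcard
  rw [welfare_eq_card_parts fun B hB ↦ by rw [(hparts B hB).1]; omega]
  omega

end HalfWelfareInstance

/-- the instance with bin volume `2n`, `2n` items of size `2n-1` and
`2n` items of size `2`: every reasonable SNE has welfare `n+2`, while `OPT = 2n`. -/
theorem stmt15 (n : ℕ) (hn : 2 ≤ n) :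
    (∀ π : Finpartition (univ : Finset (Fin (4 * n))),
        Reasonable (fun j : Fin (4 * n) => if (j : ℕ) < 2 * n then 2 * n - 1 else 2)
          (2 * n) π →
        IsSNE (fun j : Fin (4 * n) => if (j : ℕ) < 2 * n then 2 * n - 1 else 2)
          (2 * n) π →
        welfare (fun j : Fin (4 * n) => if (j : ℕ) < 2 * n then 2 * n - 1 else 2)
          (2 * n) π = n + 2) ∧
    (∀ σ : Finpartition (univ : Finset (Fin (4 * n))),
      welfare (fun j : Fin (4 * n) => if (j : ℕ) < 2 * n then 2 * n - 1 else 2)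
        (2 * n) σ ≤ 2 * n) ∧
    (∃ σ : Finpartition (univ : Finset (Fin (4 * n))),
      welfare (fun j : Fin (4 * n) => if (j : ℕ) < 2 * n then 2 * n - 1 else 2)
        (2 * n) σ = 2 * n) :=
  ⟨fun _ _ hπ ↦ HalfWelfareInstance.welfare_of_isSNE hn hπ,
    HalfWelfareInstance.welfare_size_le hn,
    ⟨HalfWelfareInstance.pairing n, HalfWelfareInstance.welfare_pairing (by omega)⟩⟩
end
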